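/- Let ℓ ≥ 2 be an integer. There exists a constant C > 0 depending only on ℓ such that for all positive integers h_1, …, h_ℓ, all M ∈ ℕ, and all t ∈ ℤ, the number of tuples (m_1, …, m_ℓ) ∈ [±M]^{ℓ} with h_1·m_1 + ⋯ + h_ℓ·m_ℓ = t is at most C·(M^{ℓ−1}·gcd(h_1, …, h_ℓ)/h_ℓ + M^{ℓ−2}). -/

import Mathlib

/-!
Induction on the number of variables, eliminating `m₀`. Let `d` be the gcd of the other
coefficients and `g = gcd(h₀, d)` the gcd of all of them. A solution forces
`h₀ m₀ ≡ t (mod d)`, which confines `m₀` to one residue class modulo `d / g`, so at most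
`2M g / d + 1` values of `m₀` occur. For each of them the remaining variables solve an equation
whose coefficients have gcd `d`, with `O(M^(ℓ-2) d / hₗ + M^(ℓ-3))` solutions by induction.
As `g ≤ d ≤ hₗ` and `M ≥ 1`, the product is `O(M^(ℓ-1) g / hₗ + M^(ℓ-2))`.
Multiplying the bound through by `M` lets the induction start from a single variable.
-/

open Finset

theorem Fin.gcd_univ_succ {α : Type*} [CommMonoidWithZero α] [NormalizedGCDMonoid α] {n : ℕ}
    (f : Fin (n + 1) → α) : univ.gcd f = GCDMonoid.gcd (f 0) (univ.gcd (Fin.tail f)) := by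
  rw [Fin.univ_succ, gcd_cons, Finset.gcd, Finset.gcd, fold_map]
  rfl

theorem Int.card_filter_modEq_Icc_mul_le {q : ℤ} (hq : 0 < q) {a b : ℤ} (hab : a ≤ b) (v : ℤ) :
    (#{x ∈ Icc a b | x ≡ v [ZMOD q]} : ℤ) * q ≤ b - a + q := by
  have hIcc : Icc a b = Ioc (a - 1) b := by ext; simp only [mem_Icc, mem_Ioc]; omega
  rw [hIcc, Int.Ioc_filter_modEq_card _ _ hq, max_mul_of_nonneg _ _ hq.le, zero_mul]
  refine max_le (Int.lt_add_one_iff.1 ?_) (by linarith)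
  have hq' : (0 : ℚ) < q := by exact_mod_cast hq
  have hb := Int.floor_le ((b - v) / (q : ℚ))
  have ha := Int.lt_floor_add_one (((a - 1 : ℤ) - v) / (q : ℚ))
  rw [le_div_iff₀ hq'] at hb
  rw [div_lt_iff₀ hq'] at ha
  have : ((⌊(b - v) / (q : ℚ)⌋ - ⌊((a - 1 : ℤ) - v) / (q : ℚ)⌋ : ℤ) : ℚ) * q <
      (b - a + q + 1 : ℤ) := by
    push_cast at ha ⊢
    linarith
  exact_mod_cast this

theorem Int.card_filter_mul_modEq_Icc_mul_le {q : ℤ} (hq : 0 < q) {a b : ℤ} (hab : a ≤ b)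
    (c t : ℤ) : (#{x ∈ Icc a b | c * x ≡ t [ZMOD q]} : ℤ) * q ≤ (b - a) * Int.gcd q c + q := by
  obtain hA | ⟨x₀, hx₀⟩ := ({x ∈ Icc a b | c * x ≡ t [ZMOD q]}).eq_empty_or_nonempty
  · rw [hA, card_empty, Nat.cast_zero, zero_mul]
    have := sub_nonneg.2 hab
    positivity
  set g : ℤ := ↑(Int.gcd q c)
  set q' := q / g
  have hg : 0 < g := Int.natCast_pos.2 (Int.gcd_pos_of_ne_zero_left c hq.ne')
  have hq' : q' * g = q := Int.ediv_mul_cancel (Int.gcd_dvd_left q c)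
  have hq'pos : 0 < q' := pos_of_mul_pos_left (hq'.symm ▸ hq) hg.le
  have hsub : {x ∈ Icc a b | c * x ≡ t [ZMOD q]} ⊆ {x ∈ Icc a b | x ≡ x₀ [ZMOD q']} := by
    intro x hx
    rw [mem_filter] at hx hx₀ ⊢
    exact ⟨hx.1, Int.ModEq.cancel_left_div_gcd hq (hx.2.trans hx₀.2.symm)⟩
  calc (#{x ∈ Icc a b | c * x ≡ t [ZMOD q]} : ℤ) * q
      = #{x ∈ Icc a b | c * x ≡ t [ZMOD q]} * q' * g := by rw [mul_assoc, hq']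
    _ ≤ #{x ∈ Icc a b | x ≡ x₀ [ZMOD q']} * q' * g := by gcongr
    _ ≤ (b - a + q') * g := by gcongr; exact Int.card_filter_modEq_Icc_mul_le hq'pos hab x₀
    _ = (b - a) * g + q := by rw [← hq']; ring

noncomputable def boxSolutions {n : ℕ} (h : Fin n → ℤ) (M : ℕ) (t : ℤ) : Finset (Fin n → ℤ) :=
  {m ∈ Fintype.piFinset fun _ ↦ Icc (-(M : ℤ)) M | ∑ i, h i * m i = t}

theorem coe_boxSolutions {n : ℕ} (h : Fin n → ℤ) (M : ℕ) (t : ℤ) :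
    (boxSolutions h M t : Set (Fin n → ℤ)) =
      {m | (∀ i, -(M : ℤ) ≤ m i ∧ m i ≤ (M : ℤ)) ∧ ∑ i, h i * m i = t} := by
  ext m
  simp [boxSolutions]

theorem card_boxSolutions_le_one {h : Fin 1 → ℤ} (h0 : h 0 ≠ 0) (M : ℕ) (t : ℤ) :
    #(boxSolutions h M t) ≤ 1 := by
  refine card_le_one.2 fun m hm m' hm' ↦ funext fun i ↦ ?_
  simp only [boxSolutions, mem_filter, Fin.sum_univ_one] at hm hm'
  rw [Subsingleton.elim i 0]
  exact mul_left_cancel₀ h0 (hm.2.trans hm'.2.symm)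

theorem card_boxSolutions_succ_le {n : ℕ} (h : Fin (n + 1) → ℤ) {d : ℤ}
    (hd : ∀ i : Fin n, d ∣ h i.succ) (M : ℕ) (t : ℤ) :
    #(boxSolutions h M t) ≤ ∑ x ∈ Icc (-(M : ℤ)) M with h 0 * x ≡ t [ZMOD d],
      #(boxSolutions (Fin.tail h) M (t - h 0 * x)) := by
  have hsum (m : Fin (n + 1) → ℤ) :
      ∑ i, h i * m i = h 0 * m 0 + ∑ i, Fin.tail h i * Fin.tail m i :=
    Fin.sum_univ_succ _
  rw [card_eq_sum_card_fiberwise (f := fun m ↦ m 0)]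
  · refine sum_le_sum fun x _ ↦ card_le_card_of_injOn Fin.tail ?_ ?_
    · intro m hm
      simp only [boxSolutions, mem_coe, mem_filter, Fintype.mem_piFinset, hsum] at hm ⊢
      exact ⟨fun i ↦ hm.1.1 i.succ, by rw [← hm.2, ← hm.1.2]; ring⟩
    · intro m hm m' hm' hmm'
      simp only [mem_coe, mem_filter] at hm hm'
      rw [← Fin.cons_self_tail m, ← Fin.cons_self_tail m', hm.2, hm'.2, hmm']
  · intro m hm
    simp only [boxSolutions, mem_coe, mem_filter, Fintype.mem_piFinset, hsum] at hm ⊢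
    refine ⟨hm.1 0, Int.modEq_iff_dvd.2 ?_⟩
    rw [← hm.2, add_sub_cancel_left]
    exact dvd_sum fun i _ ↦ (hd i).mul_right _

theorem mul_card_boxSolutions_le_of_tail {n : ℕ} (h : Fin (n + 1) → ℤ) {d : ℤ} (hd₀ : 0 < d)
    (hd : ∀ i : Fin n, d ∣ h i.succ) {M : ℕ} {B : ℝ}
    (hB : ∀ s, (M : ℝ) * #(boxSolutions (Fin.tail h) M s) ≤ B) (t : ℤ) :
    (M : ℝ) * #(boxSolutions h M t) ≤ (2 * M * (Int.gcd d (h 0) / d : ℝ) + 1) * B := by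
  set A := {x ∈ Icc (-(M : ℤ)) M | h 0 * x ≡ t [ZMOD d]}
  have hA : (#A : ℝ) ≤ 2 * M * (Int.gcd d (h 0) / d : ℝ) + 1 := by
    have := Int.card_filter_mul_modEq_Icc_mul_le hd₀ (by omega : -(M : ℤ) ≤ M) (h 0) t
    rw [mul_div_assoc', div_add_one (by positivity), le_div_iff₀ (by positivity)]
    exact_mod_cast (by linarith : (#A : ℤ) * d ≤ 2 * M * Int.gcd d (h 0) + d)
  have hB₀ : 0 ≤ B := (by positivity : (0 : ℝ) ≤ M * _).trans (hB 0)
  calc (M : ℝ) * #(boxSolutions h M t)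
      ≤ ∑ x ∈ A, (M : ℝ) * #(boxSolutions (Fin.tail h) M (t - h 0 * x)) := by
        rw [← mul_sum]
        gcongr
        exact_mod_cast card_boxSolutions_succ_le h hd M t
    _ ≤ #A * B := by
        rw [← nsmul_eq_mul, ← sum_const]
        exact sum_le_sum fun x _ ↦ hB _
    _ ≤ (2 * M * (Int.gcd d (h 0) / d : ℝ) + 1) * B := by gcongr

theorem two_mul_add_one_mul_le {M u w : ℝ} (k : ℕ) (hM : 1 ≤ M) (hu₀ : 0 ≤ u) (hu₁ : u ≤ 1)
    (hw₀ : 0 ≤ w) (hw₁ : w ≤ 1) :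
    (2 * M * u + 1) * (M ^ (k + 1) * w + M ^ k) ≤ 4 * (M ^ (k + 2) * (u * w) + M ^ (k + 1)) := by
  have hP : 0 ≤ M ^ k := by positivity
  have hPM : M ^ k ≤ M ^ (k + 1) := pow_le_pow_right₀ hM k.le_succ
  rw [pow_succ] at hPM ⊢
  rw [pow_succ, pow_succ]
  nlinarith [mul_le_mul_of_nonneg_left hu₁ (by positivity : 0 ≤ M ^ k * M),
    mul_le_mul_of_nonneg_left hw₁ (by positivity : 0 ≤ M ^ k * M),
    mul_nonneg (mul_nonneg hu₀ hw₀) (by positivity : 0 ≤ M ^ k * M * M)]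

theorem mul_card_boxSolutions_le (k : ℕ) {h : Fin (k + 1) → ℤ} (hpos : ∀ i, 0 < h i) {M : ℕ}
    (hM : 0 < M) (t : ℤ) :
    (M : ℝ) * #(boxSolutions h M t) ≤
      4 ^ k * ((M : ℝ) ^ (k + 1) * (univ.gcd h : ℤ) / h (Fin.last k) + (M : ℝ) ^ k) := by
  induction k generalizing t with
  | zero =>
    have hg : univ.gcd h = h (Fin.last 0) := by
      rw [Fin.gcd_univ_succ, univ_eq_empty, gcd_empty, gcd_zero_right,
        Int.normalize_of_nonneg (hpos 0).le]
      rfl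
    have hcard : (#(boxSolutions h M t) : ℝ) ≤ 1 := by
      exact_mod_cast card_boxSolutions_le_one (hpos 0).ne' M t
    rw [hg, mul_div_assoc, div_self (by exact_mod_cast (hpos _).ne')]
    simp only [pow_zero, zero_add, pow_one, one_mul, mul_one]
    nlinarith
  | succ k ih =>
    set d := univ.gcd (Fin.tail h)
    set g := univ.gcd h
    set e := h (Fin.last (k + 1))
    have hgcd : (Int.gcd d (h 0) : ℤ) = g := by
      rw [Int.coe_gcd, gcd_comm]
      exact (Fin.gcd_univ_succ h).symm
    have hd : ∀ i : Fin (k + 1), d ∣ h i.succ := fun i ↦ gcd_dvd (mem_univ i)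
    have he : (0 : ℝ) < e := by exact_mod_cast hpos _
    have hd₀ : 0 < d := Int.finsetGcd_nonneg.lt_of_ne fun h0 ↦
      (hpos (Fin.succ 0)).ne' (gcd_eq_zero_iff.1 h0.symm 0 (mem_univ 0))
    have hde : (d : ℝ) ≤ e := by exact_mod_cast Int.le_of_dvd (hpos _) (hd (Fin.last k))
    have hgd : (g : ℝ) ≤ d := by exact_mod_cast Int.le_of_dvd hd₀ (hgcd ▸ Int.gcd_dvd_left _ _)
    have hdR : (0 : ℝ) < d := by exact_mod_cast hd₀
    have hg : (0 : ℝ) ≤ g := by exact_mod_cast Int.finsetGcd_nonneg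
    calc (M : ℝ) * #(boxSolutions h M t)
        ≤ (2 * M * (g / d : ℝ) + 1) * (4 ^ k * ((M : ℝ) ^ (k + 1) * d / e + (M : ℝ) ^ k)) := by
          rw [← hgcd]
          exact mul_card_boxSolutions_le_of_tail h hd₀ hd (ih fun i ↦ hpos i.succ) t
      _ ≤ 4 ^ k * (4 * ((M : ℝ) ^ (k + 2) * ((g / d : ℝ) * (d / e : ℝ)) + (M : ℝ) ^ (k + 1))) := by
          rw [mul_left_comm, mul_div_assoc]
          refine mul_le_mul_of_nonneg_left (two_mul_add_one_mul_le k (Nat.one_le_cast.2 hM)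
            (div_nonneg hg hdR.le) (div_le_one_of_le₀ hgd hdR.le) (div_nonneg hdR.le he.le)
            (div_le_one_of_le₀ hde he.le)) (by positivity)
      _ = 4 ^ (k + 1) * ((M : ℝ) ^ (k + 2) * g / e + (M : ℝ) ^ (k + 1)) := by
          rw [div_mul_div_cancel₀ hdR.ne']
          ring

theorem stmt16_general (n : ℕ) :
    ∃ C : ℝ, 0 < C ∧
      ∀ (h : Fin (n + 1) → ℤ), (∀ i, 0 < h i) →
      ∀ (M : ℕ), 0 < M → ∀ t : ℤ,
        (Set.ncard {m : Fin (n + 1) → ℤ |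
            (∀ i, -(M : ℤ) ≤ m i ∧ m i ≤ (M : ℤ)) ∧
            (∑ i, h i * m i) = t} : ℝ) ≤
          C * ((M : ℝ) ^ n * (((Finset.univ.gcd h : ℤ) : ℝ)) / (h (Fin.last n) : ℝ) +
            (M : ℝ) ^ (n - 1)) := by
  refine ⟨4 ^ n, by positivity, fun h hpos M hM t ↦ ?_⟩
  rw [← coe_boxSolutions, Set.ncard_coe_finset]
  have hM' : (1 : ℝ) ≤ M := Nat.one_le_cast.2 hM
  have hpow : (M : ℝ) ^ n ≤ M * M ^ (n - 1) := by
    rw [← pow_succ']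
    exact pow_le_pow_right₀ hM' (by omega)
  refine le_of_mul_le_mul_left ?_ (by positivity : (0 : ℝ) < M)
  calc (M : ℝ) * #(boxSolutions h M t)
      ≤ 4 ^ n * ((M : ℝ) ^ (n + 1) * (univ.gcd h : ℤ) / h (Fin.last n) + (M : ℝ) ^ n) :=
        mul_card_boxSolutions_le n hpos hM t
    _ ≤ 4 ^ n * (M * ((M : ℝ) ^ n * (univ.gcd h : ℤ) / h (Fin.last n)) + M * (M : ℝ) ^ (n - 1)) := by
        rw [pow_succ', mul_assoc, mul_div_assoc]
        gcongr
    _ = M * (4 ^ n * ((M : ℝ) ^ n * (univ.gcd h : ℤ) / h (Fin.last n) + (M : ℝ) ^ (n - 1))) := by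
        ring

/-- Bound on the number of solutions to a linear equation (Corollary 6.2 of the paper).
Here `ℓ = n + 1 ≥ 2`. -/
theorem stmt16 (n : ℕ) (hn : 1 ≤ n) :
    ∃ C : ℝ, 0 < C ∧
      ∀ (h : Fin (n + 1) → ℤ), (∀ i, 0 < h i) →
      ∀ (M : ℕ), 0 < M → ∀ t : ℤ,
        (Set.ncard {m : Fin (n + 1) → ℤ |
            (∀ i, -(M : ℤ) ≤ m i ∧ m i ≤ (M : ℤ)) ∧
            (∑ i, h i * m i) = t} : ℝ) ≤
          C * ((M : ℝ) ^ n * (((Finset.univ.gcd h : ℤ) : ℝ)) / (h (Fin.last n) : ℝ) +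
            (M : ℝ) ^ (n - 1)) :=
  stmt16_general n
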